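/- Let A, B be positive definite matrices, p ∈ [0,1], q ∈ (0,1). Then max{p/q,(1−p)/(1−q)}·(A ∇_q B − A #_q B) ≥ A ∇_p B − A #_p B ≥ min{p/q,(1−p)/(1−q)}·(A ∇_q B − A #_q B), in the Loewner order. -/

import Mathlib

open Matrix ComplexOrder

/-- Real power of a Hermitian matrix via the spectral theorem (functional calculus);
junk value `0` for non-Hermitian matrices. -/
noncomputable def Matrix.hrpow {n : ℕ} (A : Matrix (Fin n) (Fin n) ℂ) (r : ℝ) :
    Matrix (Fin n) (Fin n) ℂ :=
  if h : A.IsHermitian then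
    (h.eigenvectorUnitary : Matrix (Fin n) (Fin n) ℂ) *
      Matrix.diagonal (fun i => ((h.eigenvalues i ^ r : ℝ) : ℂ)) *
      (h.eigenvectorUnitary : Matrix (Fin n) (Fin n) ℂ)ᴴ
  else 0

/-- Weighted geometric mean `A #_ν B` of positive definite matrices:
`A^{1/2} (A^{-1/2} B A^{-1/2})^ν A^{1/2}`. -/
noncomputable def Matrix.gmean {n : ℕ} (A B : Matrix (Fin n) (Fin n) ℂ) (ν : ℝ) :
    Matrix (Fin n) (Fin n) ℂ :=
  A.hrpow (1/2) * ((A.hrpow (-(1/2)) * B * A.hrpow (-(1/2))).hrpow ν) * A.hrpow (1/2)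

/-- Quadratic weighted geometric mean `X ⓢ_ν Y = X* (|Y X⁻¹|²)^ν X`. -/
noncomputable def Matrix.qgmean {n : ℕ} (X Y : Matrix (Fin n) (Fin n) ℂ) (ν : ℝ) :
    Matrix (Fin n) (Fin n) ℂ :=
  Xᴴ * ((Y * X⁻¹)ᴴ * (Y * X⁻¹)).hrpow ν * X

/-!
Put `C = A^{-1/2} B A^{-1/2}` and `g_ν(x) = youngGap ν x = (1 - ν) + ν x - x^ν`. Then
`A ∇_ν B - A #_ν B = A^{1/2} g_ν(C) A^{1/2}`, and since congruence and the functional calculus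
are monotone in the Loewner order, the theorem reduces to the scalar inequalities
`min {p/q, (1-p)/(1-q)} g_q(x) ≤ g_p(x) ≤ max {p/q, (1-p)/(1-q)} g_q(x)` for `x > 0`.
These hold for every concave `g` on `[0, 1]` vanishing at both endpoints (here `ν ↦ x^ν` is
convex): concavity along the chord from the endpoint `0` gives `g p ≥ (p/q) g q` for `p ≤ q`,
and from the endpoint `1` gives `g p ≥ ((1-p)/(1-q)) g q` for `q ≤ p`; exchanging `p` and `q`
yields the upper bounds.
-/

open Set

theorem ConcaveOn.div_mul_le_of_map_eq_zero {s : Set ℝ} {g : ℝ → ℝ} {a p q : ℝ}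
    (hg : ConcaveOn ℝ s g) (ha : a ∈ s) (hq : q ∈ s) (hga : g a = 0) (hqa : q ≠ a)
    (hp : p ∈ uIcc a q) : (p - a) / (q - a) * g q ≤ g p := by
  obtain ⟨u, v, hu, hv, huv, rfl⟩ := segment_eq_uIcc a q ▸ hp
  obtain rfl : u = 1 - v := eq_sub_of_add_eq huv
  have hratio : ((1 - v) • a + v • q - a) / (q - a) = v := by
    rw [div_eq_iff (sub_ne_zero.mpr hqa), smul_eq_mul, smul_eq_mul]
    ring
  rw [hratio]
  simpa [hga] using hg.2 ha hq hu hv huv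

theorem ConcaveOn.le_div_mul_of_map_eq_zero {s : Set ℝ} {g : ℝ → ℝ} {a p q : ℝ}
    (hg : ConcaveOn ℝ s g) (ha : a ∈ s) (hp : p ∈ s) (hga : g a = 0) (hqa : q ≠ a)
    (hq : q ∈ uIcc a p) : g p ≤ (p - a) / (q - a) * g q := by
  obtain ⟨u, v, hu, hv, huv, rfl⟩ := segment_eq_uIcc a p ▸ hq
  obtain rfl : u = 1 - v := eq_sub_of_add_eq huv
  simp only [smul_eq_mul] at hqa ⊢
  have hpa : p - a ≠ 0 := fun h => hqa (by linear_combination v * h)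
  have hv0 : v ≠ 0 := by rintro rfl; simp at hqa
  rw [show (1 - v) * a + v * p - a = v * (p - a) by ring, mul_comm v, div_mul_cancel_left₀ hpa,
    le_inv_mul_iff₀ (hv.lt_of_ne' hv0)]
  simpa [hga] using hg.2 ha hp hu hv huv

theorem ConcaveOn.min_mul_le_and_le_max_mul {g : ℝ → ℝ} {p q : ℝ}
    (hg : ConcaveOn ℝ (Icc 0 1) g) (hg0 : g 0 = 0) (hg1 : g 1 = 0)
    (hp : p ∈ Icc (0 : ℝ) 1) (hq : q ∈ Ioo (0 : ℝ) 1) :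
    min (p / q) ((1 - p) / (1 - q)) * g q ≤ g p ∧
      g p ≤ max (p / q) ((1 - p) / (1 - q)) * g q := by
  obtain ⟨hp0, hp1⟩ := hp
  obtain ⟨hq0, hq1⟩ := hq
  have h0 : (0 : ℝ) ∈ Icc 0 1 := left_mem_Icc.2 zero_le_one
  have h1 : (1 : ℝ) ∈ Icc 0 1 := right_mem_Icc.2 zero_le_one
  have hratio : (p - 1) / (q - 1) = (1 - p) / (1 - q) := by
    rw [← neg_sub 1 p, ← neg_sub 1 q, neg_div_neg_eq]
  rcases le_total p q with hpq | hqp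
  · have hle : p / q ≤ (1 - p) / (1 - q) := by
      rw [div_le_div_iff₀ hq0 (sub_pos.2 hq1)]; nlinarith
    rw [min_eq_left hle, max_eq_right hle]
    constructor
    · simpa using hg.div_mul_le_of_map_eq_zero h0 ⟨hq0.le, hq1.le⟩ hg0 hq0.ne'
        (mem_uIcc_of_le hp0 hpq)
    · simpa [hratio] using hg.le_div_mul_of_map_eq_zero h1 ⟨hp0, hp1⟩ hg1 hq1.ne
        (mem_uIcc_of_ge hpq hq1.le)
  · have hle : (1 - p) / (1 - q) ≤ p / q := by
      rw [div_le_div_iff₀ (sub_pos.2 hq1) hq0]; nlinarith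
    rw [min_eq_right hle, max_eq_left hle]
    constructor
    · simpa [hratio] using hg.div_mul_le_of_map_eq_zero h1 ⟨hq0.le, hq1.le⟩ hg1 hq1.ne
        (mem_uIcc_of_ge hqp hp1)
    · simpa using hg.le_div_mul_of_map_eq_zero h0 ⟨hp0, hp1⟩ hg0 hq0.ne'
        (mem_uIcc_of_le hq0.le hqp)

noncomputable def youngGap (ν x : ℝ) : ℝ := (1 - ν) + ν * x - x ^ ν

theorem concaveOn_youngGap {x : ℝ} (hx : 0 < x) : ConcaveOn ℝ univ (youngGap · x) := by
  refine ConcaveOn.sub ⟨convex_univ, fun ν₁ _ ν₂ _ a b _ _ hab => le_of_eq ?_⟩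
    (convexOn_rpow_left hx)
  simp only [smul_eq_mul]
  linear_combination hab

theorem youngGap_bounds {x p q : ℝ} (hx : 0 < x) (hp : p ∈ Icc (0 : ℝ) 1)
    (hq : q ∈ Ioo (0 : ℝ) 1) :
    min (p / q) ((1 - p) / (1 - q)) * youngGap q x ≤ youngGap p x ∧
      youngGap p x ≤ max (p / q) ((1 - p) / (1 - q)) * youngGap q x :=
  ((concaveOn_youngGap hx).subset (subset_univ _) (convex_Icc 0 1)).min_mul_le_and_le_max_mul
    (by simp [youngGap]) (by simp [youngGap]) hp hq

namespace Matrix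

section Conjugation

variable {ι 𝕜 : Type*} [Fintype ι] [DecidableEq ι] [RCLike 𝕜]

theorem smul_conj_cfc (c : ℝ) (f : ℝ → ℝ) (S C : Matrix ι ι 𝕜) :
    c • (S * cfc f C * S) = S * cfc (fun x => c * f x) C * S := by
  rw [cfc_const_mul c f C (C.finite_real_spectrum.continuousOn f), mul_smul_comm, smul_mul_assoc]

open scoped MatrixOrder in
theorem IsHermitian.conj_cfc_le_conj_cfc {S C : Matrix ι ι 𝕜} (hS : S.IsHermitian) {f g : ℝ → ℝ}
    (h : ∀ x ∈ spectrum ℝ C, f x ≤ g x) : S * cfc f C * S ≤ S * cfc g C * S :=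
  hS.isSelfAdjoint.conjugate_le_conjugate <|
    cfc_mono h (C.finite_real_spectrum.continuousOn f) (C.finite_real_spectrum.continuousOn g)

end Conjugation

variable {n : ℕ} {A : Matrix (Fin n) (Fin n) ℂ}

theorem IsHermitian.hrpow_eq_cfc (hA : A.IsHermitian) (r : ℝ) :
    A.hrpow r = cfc (fun x : ℝ => x ^ r) A := by
  rw [hrpow, dif_pos hA, hA.cfc_eq, IsHermitian.cfc, Unitary.conjStarAlgAut_apply]
  rfl

theorem IsHermitian.hrpow_isHermitian (hA : A.IsHermitian) (r : ℝ) : (A.hrpow r).IsHermitian := by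
  rw [hA.hrpow_eq_cfc]
  exact cfc_predicate _ A

theorem IsHermitian.hrpow_zero (hA : A.IsHermitian) : A.hrpow 0 = 1 := by
  simp only [hA.hrpow_eq_cfc, Real.rpow_zero]
  exact cfc_const_one ℝ A hA

theorem IsHermitian.hrpow_one (hA : A.IsHermitian) : A.hrpow 1 = A := by
  simp only [hA.hrpow_eq_cfc, Real.rpow_one]
  exact cfc_id' ℝ A hA

theorem PosDef.pos_of_mem_spectrum (hA : A.PosDef) {x : ℝ} (hx : x ∈ spectrum ℝ A) : 0 < x := by
  obtain ⟨i, rfl⟩ := hA.1.spectrum_real_eq_range_eigenvalues ▸ hx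
  exact hA.eigenvalues_pos i

theorem PosDef.hrpow_mul_hrpow (hA : A.PosDef) (r s : ℝ) :
    A.hrpow r * A.hrpow s = A.hrpow (r + s) := by
  rw [hA.1.hrpow_eq_cfc, hA.1.hrpow_eq_cfc, hA.1.hrpow_eq_cfc,
    ← cfc_mul _ _ _ (A.finite_real_spectrum.continuousOn _) (A.finite_real_spectrum.continuousOn _)]
  exact cfc_congr fun x hx => (Real.rpow_add (hA.pos_of_mem_spectrum hx) r s).symm

theorem PosDef.hrpow_half_mul_hrpow_half (hA : A.PosDef) : A.hrpow (1/2) * A.hrpow (1/2) = A := by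
  rw [hA.hrpow_mul_hrpow]; norm_num [hA.1.hrpow_one]

theorem PosDef.hrpow_half_mul_hrpow_neg_half (hA : A.PosDef) :
    A.hrpow (1/2) * A.hrpow (-(1/2)) = 1 := by
  rw [hA.hrpow_mul_hrpow, add_neg_cancel, hA.1.hrpow_zero]

theorem PosDef.hrpow_neg_half_mul_hrpow_half (hA : A.PosDef) :
    A.hrpow (-(1/2)) * A.hrpow (1/2) = 1 := by
  rw [hA.hrpow_mul_hrpow, neg_add_cancel, hA.1.hrpow_zero]

theorem PosDef.posDef_hrpow_neg_half_conj {B : Matrix (Fin n) (Fin n) ℂ} (hA : A.PosDef)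
    (hB : B.PosDef) :
    (A.hrpow (-(1/2)) * B * A.hrpow (-(1/2))).PosDef := by
  have hT := hA.1.hrpow_isHermitian (-(1/2))
  have hTunit : IsUnit (A.hrpow (-(1/2))) :=
    ⟨⟨_, _, hA.hrpow_neg_half_mul_hrpow_half, hA.hrpow_half_mul_hrpow_neg_half⟩, rfl⟩
  rw [← hTunit.posDef_star_left_conjugate_iff, star_eq_conjTranspose, hT.eq] at hB
  exact hB

theorem PosDef.hrpow_half_conj_hrpow_neg_half_conj (hA : A.PosDef)
    (B : Matrix (Fin n) (Fin n) ℂ) :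
    A.hrpow (1/2) * (A.hrpow (-(1/2)) * B * A.hrpow (-(1/2))) * A.hrpow (1/2) = B := by
  simp only [mul_assoc]
  rw [hA.hrpow_neg_half_mul_hrpow_half, mul_one, ← mul_assoc, hA.hrpow_half_mul_hrpow_neg_half,
    one_mul]

theorem IsHermitian.cfc_youngGap (hA : A.IsHermitian) (ν : ℝ) :
    cfc (youngGap ν) A = algebraMap ℝ _ (1 - ν) + ν • A - A.hrpow ν := by
  have hcont (f : ℝ → ℝ) : ContinuousOn f (spectrum ℝ A) := A.finite_real_spectrum.continuousOn f
  rw [hA.hrpow_eq_cfc, ← cfc_const_mul_id ν A hA.isSelfAdjoint,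
    ← cfc_const_add (1 - ν) _ A (hcont _) hA.isSelfAdjoint,
    ← cfc_sub _ _ A (hcont _) (hcont _)]
  rfl

theorem PosDef.amean_sub_gmean_eq {B : Matrix (Fin n) (Fin n) ℂ} (hA : A.PosDef)
    (hB : B.IsHermitian) (ν : ℝ) :
    (((1 - ν : ℝ) : ℂ) • A + ((ν : ℝ) : ℂ) • B) - A.gmean B ν =
      A.hrpow (1/2) * cfc (youngGap ν) (A.hrpow (-(1/2)) * B * A.hrpow (-(1/2))) *
        A.hrpow (1/2) := by
  have hC : (A.hrpow (-(1/2)) * B * A.hrpow (-(1/2))).IsHermitian := by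
    simpa only [(hA.1.hrpow_isHermitian _).eq] using
      isHermitian_conjTranspose_mul_mul (A.hrpow (-(1/2))) hB
  rw [hC.cfc_youngGap, gmean, Algebra.algebraMap_eq_smul_one, Complex.coe_smul, Complex.coe_smul]
  simp only [mul_sub, sub_mul, mul_add, add_mul, mul_smul_comm, smul_mul_assoc, mul_one,
    hA.hrpow_half_mul_hrpow_half, hA.hrpow_half_conj_hrpow_neg_half_conj]

end Matrix

theorem stmt_17 {n : ℕ} (A B : Matrix (Fin n) (Fin n) ℂ)
    (hA : A.PosDef) (hB : B.PosDef)
    {p q : ℝ} (hp : p ∈ Set.Icc (0:ℝ) 1) (hq : q ∈ Set.Ioo (0:ℝ) 1) :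
    ((max (p / q) ((1 - p) / (1 - q)) : ℝ) •
        ((((1 - q : ℝ) : ℂ) • A + ((q : ℝ) : ℂ) • B) - A.gmean B q) -
      ((((1 - p : ℝ) : ℂ) • A + ((p : ℝ) : ℂ) • B) - A.gmean B p)).PosSemidef ∧
    (((((1 - p : ℝ) : ℂ) • A + ((p : ℝ) : ℂ) • B) - A.gmean B p) -
      (min (p / q) ((1 - p) / (1 - q)) : ℝ) •
        ((((1 - q : ℝ) : ℂ) • A + ((q : ℝ) : ℂ) • B) - A.gmean B q)).PosSemidef := by
  have hS := hA.1.hrpow_isHermitian (1/2)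
  have hC := hA.posDef_hrpow_neg_half_conj hB
  have hbounds (x : ℝ) (hx : x ∈ spectrum ℝ (A.hrpow (-(1/2)) * B * A.hrpow (-(1/2)))) :=
    youngGap_bounds (hC.pos_of_mem_spectrum hx) hp hq
  simp only [hA.amean_sub_gmean_eq hB.1, Matrix.smul_conj_cfc, ← Matrix.le_iff]
  exact ⟨hS.conj_cfc_le_conj_cfc fun x hx => (hbounds x hx).2,
    hS.conj_cfc_le_conj_cfc fun x hx => (hbounds x hx).1⟩
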